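/- arXiv:2002.12216 — 9 statements merged into one kernel-verified Lean document; each statement's English description precedes it below -/
import Mathlib

section
/- For every odd integer n ≥ 3, the maximum over all assignments a : Fin n → {−1, 1} of the quantity −∑_{i=1}^{n} a_i·a_{i+1} (indices mod n) equals n − 2. -/
open Finset

theorem kcbs_classical_bound (n : ℕ) [NeZero n] (hodd : Odd n) (hn : 3 ≤ n) :
    IsGreatest
      {x : ℝ | ∃ a : ZMod n → ℝ, (∀ i, a i = 1 ∨ a i = -1) ∧
        x = -∑ i : ZMod n, a i * a (i + 1)}
      ((n : ℝ) - 2) := by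
  have hn1 : 1 < n := by omega
  haveI : Fact (1 < n) := ⟨hn1⟩
  have hcard : Fintype.card (ZMod n) = n := ZMod.card n
  constructor
  · -- membership: alternating assignment
    refine ⟨fun i => if Even i.val then 1 else -1, fun i => ?_, ?_⟩
    · dsimp only; split <;> simp
    · have hval1 : (1 : ZMod n).val = 1 := ZMod.val_one n
      have hvalneg : (-1 : ZMod n).val = n - 1 := by
        obtain ⟨m, rfl⟩ : ∃ m, n = m + 1 := ⟨n - 1, by omega⟩
        simp [ZMod.val_neg_one m]
      have key : ∀ i : ZMod n,
          (if Even i.val then (1:ℝ) else -1) * (if Even (i+1).val then (1:ℝ) else -1)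
            = if i = -1 then 1 else -1 := by
        intro i
        by_cases hi : i = -1
        · subst hi
          have h0 : (-1 + 1 : ZMod n) = 0 := by ring
          have he : Even ((-1 : ZMod n)).val := by
            rw [hvalneg]
            obtain ⟨k, hk⟩ := hodd
            exact ⟨k, by omega⟩
          rw [h0, hvalneg] at *
          rw [ZMod.val_zero, if_pos he, if_pos Even.zero, if_pos rfl]
          ring
        · have hlt : i.val < n - 1 := by
            have h1 : i.val < n := ZMod.val_lt i
            have h2 : i.val ≠ n - 1 := by
              intro h
              exact hi (ZMod.val_injective n (by rw [h, hvalneg]))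
            omega
          have hadd : (i + 1).val = i.val + 1 := by
            rw [ZMod.val_add_of_lt (by rw [hval1]; omega), hval1]
          rw [hadd, if_neg hi]
          rcases Nat.even_or_odd i.val with he | ho
          · rw [if_pos he, if_neg (by simp [Nat.even_add_one, he])]
            ring
          · rw [if_neg (Nat.not_even_iff_odd.2 ho),
              if_pos (by simp [Nat.even_add_one, Nat.not_even_iff_odd.2 ho])]
            ring
      show (n:ℝ) - 2 = -∑ i : ZMod n,
        (if Even i.val then (1:ℝ) else -1) * (if Even (i+1).val then (1:ℝ) else -1)
      rw [Finset.sum_congr rfl fun i _ => key i]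
      have : ∑ i : ZMod n, (if i = -1 then (1:ℝ) else -1)
          = ∑ i : ZMod n, ((if i = -1 then (2:ℝ) else 0) + (-1)) := by
        apply Finset.sum_congr rfl; intro i _; split <;> ring
      rw [this, Finset.sum_add_distrib, Finset.sum_ite_eq' _ (-1 : ZMod n) (fun _ => (2:ℝ))]
      simp [hcard]
      ring
  · -- upper bound
    rintro x ⟨a, ha, rfl⟩
    set b : ZMod n → ℝ := fun i => a i * a (i + 1) with hb
    have hbpm : ∀ i, b i = 1 ∨ b i = -1 := by
      intro i
      rcases ha i with h1 | h1 <;> rcases ha (i + 1) with h2 | h2 <;>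
        simp [hb, h1, h2]
    have hprod : ∏ i : ZMod n, b i = (∏ i : ZMod n, a i) ^ 2 := by
      rw [hb]
      rw [Finset.prod_mul_distrib, sq]
      congr 1
      exact Fintype.prod_equiv (Equiv.addRight (1 : ZMod n)) _ _ (fun i => rfl)
    have hnotall : ¬ ∀ i, b i = -1 := by
      intro h
      have : ∏ i : ZMod n, b i = (-1 : ℝ) ^ n := by
        rw [Finset.prod_congr rfl fun i _ => h i, Finset.prod_const, Finset.card_univ, hcard]
      rw [hprod, hodd.neg_one_pow] at this
      nlinarith [sq_nonneg (∏ i : ZMod n, a i)]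
    push_neg at hnotall
    obtain ⟨j, hj⟩ := hnotall
    have hj1 : b j = 1 := (hbpm j).resolve_right hj
    have hsum : (1 : ℝ) + ((n:ℝ) - 1) * (-1) ≤ ∑ i : ZMod n, b i := by
      rw [← Finset.add_sum_erase _ b (Finset.mem_univ j), hj1]
      have hcard' : ((Finset.univ.erase j).card : ℝ) = (n:ℝ) - 1 := by
        rw [Finset.card_erase_of_mem (Finset.mem_univ j), Finset.card_univ, hcard]
        push_cast [Nat.cast_sub (by omega : 1 ≤ n)]
        ring
      have := Finset.card_nsmul_le_sum (Finset.univ.erase j) b (-1)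
        (fun i _ => by rcases hbpm i with h | h <;> simp [h])
      rw [nsmul_eq_mul] at this
      nlinarith [this]
    linarith
end

section
/- For odd n ≥ 3, let θ satisfy cos θ = 1/√(1+2α) with α = 1/(2cos(π/n)), let φ_i = ((n−1)/n)·π·i, and define unit vectors v_i = (cos θ, sin θ · sin φ_i, sin θ · cos φ_i) in ℝ³ for i = 1,…,n. Then ⟨v_i, v_{i+1}⟩ = 0 for all i (indices mod n). -/
open Real Finset

theorem kcbs_vectors_orthogonal (n : ℕ) (hodd : Odd n) (hn : 3 ≤ n)
    (α θ : ℝ) (hα : α = 1 / (2 * Real.cos (π / n)))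
    (hθ : Real.cos θ = 1 / Real.sqrt (1 + 2 * α))
    (φ : ℤ → ℝ) (hφ : ∀ i, φ i = ((n : ℝ) - 1) / n * π * i)
    (v : ℤ → Fin 3 → ℝ)
    (hv : ∀ i, v i = ![Real.cos θ, Real.sin θ * Real.sin (φ i),
      Real.sin θ * Real.cos (φ i)]) :
    ∀ i : ℤ, ∑ j : Fin 3, v i j * v (i + 1) j = 0 := by
  intro i
  have hn0 : (n : ℝ) ≠ 0 := by
    have : (3 : ℝ) ≤ (n : ℝ) := by exact_mod_cast hn
    linarith
  have hnpos : (0 : ℝ) < n := by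
    have : (3 : ℝ) ≤ (n : ℝ) := by exact_mod_cast hn
    linarith
  have hcpos : 0 < Real.cos (π / n) := by
    apply Real.cos_pos_of_mem_Ioo
    constructor
    · have : 0 < π / n := by positivity
      linarith [Real.pi_pos]
    · have h3 : (3 : ℝ) ≤ (n : ℝ) := by exact_mod_cast hn
      have : π / n ≤ π / 3 := by
        apply div_le_div_of_nonneg_left Real.pi_pos.le (by norm_num) h3
      linarith [Real.pi_pos]
  have hαpos : 0 < α := by rw [hα]; positivity
  have hc2 : Real.cos θ ^ 2 = 1 / (1 + 2 * α) := by
    rw [hθ, div_pow, one_pow, Real.sq_sqrt (by linarith)]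
  have hs2 : Real.sin θ ^ 2 = 2 * α / (1 + 2 * α) := by
    have h := Real.sin_sq_add_cos_sq θ
    rw [hc2] at h
    field_simp at h ⊢
    linarith
  have hdiff : φ (i + 1) - φ i = π - π / n := by
    rw [hφ, hφ]
    push_cast
    field_simp
    ring
  have key : Real.cos (φ (i + 1)) * Real.cos (φ i) +
      Real.sin (φ (i + 1)) * Real.sin (φ i) = -Real.cos (π / n) := by
    rw [← Real.cos_sub, hdiff, Real.cos_pi_sub]
  have h2α : 2 * α * Real.cos (π / n) = 1 := by
    rw [hα]; field_simp
  have h1 : (0:ℝ) < 1 + 2 * α := by linarith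
  simp only [hv, Fin.sum_univ_three, Matrix.cons_val_zero, Matrix.cons_val_one,
    Matrix.head_cons, Matrix.cons_val_two, Matrix.tail_cons]
  have expand : Real.cos θ * Real.cos θ +
      Real.sin θ * Real.sin (φ i) * (Real.sin θ * Real.sin (φ (i + 1))) +
      Real.sin θ * Real.cos (φ i) * (Real.sin θ * Real.cos (φ (i + 1))) =
      Real.cos θ ^ 2 + Real.sin θ ^ 2 * (Real.cos (φ (i + 1)) * Real.cos (φ i) +
        Real.sin (φ (i + 1)) * Real.sin (φ i)) := by ring
  rw [expand, key, hc2, hs2]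
  field_simp
  linarith
end

section
/- For odd n ≥ 3, with α = 1/(2cos(π/n)), cos θ = 1/√(1+2α), φ_i = ((n−1)/n)·π·i, and v_i = (cos θ, sin θ sin φ_i, sin θ cos φ_i) ∈ ℝ³, the state ψ = (1,0,0) and observables A_i = 2·v_i v_iᵀ − I satisfy (A_i + α·A_{i+1} + α·A_{i−1}) ψ = (1 − 2α) ψ for all i (indices mod n). -/
open Real Finset Matrix

theorem kcbs_stabilizer_relation (n : ℕ) (hodd : Odd n) (hn : 3 ≤ n)
    (α θ : ℝ) (hα : α = 1 / (2 * Real.cos (π / n)))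
    (hθ : Real.cos θ = 1 / Real.sqrt (1 + 2 * α))
    (φ : ℤ → ℝ) (hφ : ∀ i, φ i = ((n : ℝ) - 1) / n * π * i)
    (v : ℤ → Fin 3 → ℝ)
    (hv : ∀ i, v i = ![Real.cos θ, Real.sin θ * Real.sin (φ i),
      Real.sin θ * Real.cos (φ i)])
    (A : ℤ → Matrix (Fin 3) (Fin 3) ℝ)
    (hA : ∀ i, A i = (2 : ℝ) • Matrix.vecMulVec (v i) (v i) - 1)
    (ψ : Fin 3 → ℝ) (hψ : ψ = ![1, 0, 0]) :
    ∀ i : ℤ, (A i + α • A (i + 1) + α • A (i - 1)) *ᵥ ψ = (1 - 2 * α) • ψ := by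
  intro i
  have hn0 : (n : ℝ) ≠ 0 := by positivity
  have hnpos : (0:ℝ) < n := by positivity
  have hc : 0 < Real.cos (π / n) := by
    apply Real.cos_pos_of_mem_Ioo
    constructor
    · have : (0:ℝ) < π / n := by positivity
      linarith [Real.pi_pos]
    · have h3 : (3:ℝ) ≤ n := by exact_mod_cast hn
      have : π / n ≤ π / 3 := by
        apply div_le_div_of_nonneg_left Real.pi_pos.le (by norm_num) h3
      linarith [Real.pi_pos]
  have hαpos : 0 < α := by rw [hα]; positivity
  have h1 : (0:ℝ) < 1 + 2 * α := by linarith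
  have hcos2 : Real.cos θ ^ 2 * (1 + 2 * α) = 1 := by
    rw [hθ, div_pow, one_pow, Real.sq_sqrt h1.le]
    field_simp
  have h2ac : 2 * α * Real.cos (π / n) = 1 := by
    rw [hα]; field_simp
  have hΔ : ((n:ℝ) - 1) / n * π = π - π / n := by field_simp
  have hcΔ : Real.cos (((n:ℝ) - 1) / n * π) = -Real.cos (π / n) := by
    rw [hΔ, Real.cos_pi_sub]
  have hφ1 : φ (i + 1) = φ i + ((n:ℝ) - 1) / n * π := by
    rw [hφ, hφ]; push_cast; ring
  have hφ2 : φ (i - 1) = φ i - ((n:ℝ) - 1) / n * π := by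
    rw [hφ, hφ]; push_cast; ring
  funext j
  fin_cases j
  · simp [hA, hv, hψ, Matrix.mulVec, Matrix.vecMulVec, dotProduct,
      Fin.sum_univ_three, Matrix.one_apply, hφ1, hφ2, Real.sin_add, Real.cos_add,
      Real.sin_sub, Real.cos_sub, hcΔ]
    nlinarith [hcos2]
  · simp [hA, hv, hψ, Matrix.mulVec, Matrix.vecMulVec, dotProduct,
      Fin.sum_univ_three, Matrix.one_apply, hφ1, hφ2, Real.sin_add, Real.cos_add,
      Real.sin_sub, Real.cos_sub, hcΔ]
    linear_combination (-(2 * Real.sin θ * Real.sin (φ i) * Real.cos θ)) * h2ac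
  · simp [hA, hv, hψ, Matrix.mulVec, Matrix.vecMulVec, dotProduct,
      Fin.sum_univ_three, Matrix.one_apply, hφ1, hφ2, Real.sin_add, Real.cos_add,
      Real.sin_sub, Real.cos_sub, hcΔ]
    linear_combination (-(2 * Real.sin θ * Real.cos (φ i) * Real.cos θ)) * h2ac
end

section
/- For odd n ≥ 3, with v_i = (cos θ, sin θ sin φ_i, sin θ cos φ_i) ∈ ℝ³ where cos θ = 1/√(1+2α), α = 1/(2cos(π/n)), and φ_i = ((n−1)/n)·π·i, one has |⟨v_{i−1}, v_{i+1}⟩| = (1−α)/α for all i (indices mod n). -/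
open Real Finset

theorem kcbs_vectors_next_nearest_overlap (n : ℕ) (hodd : Odd n) (hn : 3 ≤ n)
    (α θ : ℝ) (hα : α = 1 / (2 * Real.cos (π / n)))
    (hθ : Real.cos θ = 1 / Real.sqrt (1 + 2 * α))
    (φ : ℤ → ℝ) (hφ : ∀ i, φ i = ((n : ℝ) - 1) / n * π * i)
    (v : ℤ → Fin 3 → ℝ)
    (hv : ∀ i, v i = ![Real.cos θ, Real.sin θ * Real.sin (φ i),
      Real.sin θ * Real.cos (φ i)]) :
    ∀ i : ℤ, |∑ j : Fin 3, v (i - 1) j * v (i + 1) j| = (1 - α) / α := by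
  intro i
  have hn3 : (3:ℝ) ≤ n := by exact_mod_cast hn
  have hnpos : (0:ℝ) < n := by linarith
  set c := Real.cos (π / n) with hc
  have hc_half : 1/2 ≤ c := by
    rw [hc, ← Real.cos_pi_div_three]
    apply Real.cos_le_cos_of_nonneg_of_le_pi
    · positivity
    · linarith [Real.pi_pos]
    · rw [div_le_div_iff₀ hnpos (by norm_num)]
      nlinarith [Real.pi_pos]
  have hcpos : (0:ℝ) < c := by linarith
  have hαval : α = 1 / (2 * c) := hα
  have hαpos : 0 < α := by rw [hαval]; positivity
  have h12α : (0:ℝ) < 1 + 2 * α := by linarith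
  have hcos2 : Real.cos θ ^ 2 = 1 / (1 + 2 * α) := by
    rw [hθ, div_pow, one_pow, Real.sq_sqrt h12α.le]
  have hsin2 : Real.sin θ ^ 2 = 1 - 1 / (1 + 2 * α) := by
    have := Real.sin_sq_add_cos_sq θ
    linarith [hcos2]
  have hφdiff : φ (i + 1) - φ (i - 1) = 2 * π - 2 * (π / n) := by
    rw [hφ, hφ]
    push_cast
    field_simp
    ring
  have hkey : Real.cos (φ (i + 1) - φ (i - 1)) = 2 * c ^ 2 - 1 := by
    rw [hφdiff, Real.cos_two_pi_sub, Real.cos_two_mul, hc]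
  have hcossub : Real.cos (φ (i + 1)) * Real.cos (φ (i - 1)) +
      Real.sin (φ (i + 1)) * Real.sin (φ (i - 1)) = 2 * c ^ 2 - 1 := by
    rw [← Real.cos_sub, hkey]
  have hsum : ∑ j : Fin 3, v (i - 1) j * v (i + 1) j =
      Real.cos θ ^ 2 + Real.sin θ ^ 2 * (2 * c ^ 2 - 1) := by
    simp only [hv, Fin.sum_univ_three]
    simp only [Matrix.cons_val_zero, Matrix.cons_val_one, Matrix.head_cons,
      Matrix.cons_val_two, Matrix.tail_cons]
    nlinarith [hcossub]
  rw [hsum, hcos2, hsin2, hαval]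
  have h1c : (0:ℝ) < 1 + 2 * (1 / (2 * c)) := by positivity
  have hval : 1 / (1 + 2 * (1 / (2 * c))) +
      (1 - 1 / (1 + 2 * (1 / (2 * c)))) * (2 * c ^ 2 - 1) = 2 * c - 1 := by
    field_simp
    ring
  rw [hval]
  rw [abs_of_nonneg (by linarith)]
  field_simp
end

section
/- Let A₁,…,Aₙ (n odd) be Hermitian operators of the form Aᵢ = 2Fᵢ − I with 0 ≤ Fᵢ ≤ I on a finite-dimensional Hilbert space H, and let ψ ∈ H satisfy Fᵢ F_{i±1} ψ = 0, (Aᵢ + α A_{i+1} + α A_{i−1}) ψ = (1−2α) ψ, and Aᵢ² ψ = ψ for all i (indices mod n), where α = 1/(2cos(π/n)). Then the subspace V = span{ψ, A₁ψ, A₃ψ} is invariant under every Aᵢ. -/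
open Real Matrix
open scoped ComplexOrder

private lemma kcbs_aux_rec {d n : ℕ} [NeZero n] (V : Submodule ℂ (Fin d → ℂ))
    (α : ℂ) (hα : α ≠ 0) (u c : ZMod n → (Fin d → ℂ))
    (hrec : ∀ j, u j + α • u (j + 1) + α • u (j - 1) = c j)
    (hc : ∀ j, c j ∈ V) (j₀ : ZMod n) (h0 : u j₀ ∈ V) (h1 : u (j₀ + 1) ∈ V) :
    ∀ j, u j ∈ V := by
  have key : ∀ k : ℕ, u (j₀ + k) ∈ V ∧ u (j₀ + k + 1) ∈ V := by
    intro k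
    induction k with
    | zero => simpa using ⟨h0, h1⟩
    | succ k ih =>
      have hcast : ((k + 1 : ℕ) : ZMod n) = (k : ZMod n) + 1 := by push_cast; ring
      refine ⟨by rw [hcast, ← add_assoc]; exact ih.2, ?_⟩
      have h := hrec (j₀ + (k : ZMod n) + 1)
      have hsub : j₀ + (k : ZMod n) + 1 - 1 = j₀ + (k : ZMod n) := by ring
      rw [hsub] at h
      have heq : u (j₀ + (k : ZMod n) + 1 + 1)
          = α⁻¹ • (c (j₀ + (k : ZMod n) + 1) - u (j₀ + (k : ZMod n) + 1)
              - α • u (j₀ + (k : ZMod n))) := by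
        have h2 : α • u (j₀ + (k : ZMod n) + 1 + 1)
            = c (j₀ + (k : ZMod n) + 1) - u (j₀ + (k : ZMod n) + 1)
              - α • u (j₀ + (k : ZMod n)) := by
          rw [← h]; module
        calc u (j₀ + (k : ZMod n) + 1 + 1)
            = α⁻¹ • (α • u (j₀ + (k : ZMod n) + 1 + 1)) := by
              rw [smul_smul, inv_mul_cancel₀ hα, one_smul]
          _ = _ := by rw [h2]
      rw [hcast, ← add_assoc, heq]
      exact V.smul_mem _ (V.sub_mem (V.sub_mem (hc _) ih.2) (V.smul_mem _ ih.1))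
  intro j
  have : j = j₀ + ((j - j₀).val : ZMod n) := by
    rw [ZMod.natCast_val, ZMod.cast_id]; ring
  rw [this]
  exact (key _).1

theorem kcbs_invariant_subspace (n : ℕ) [NeZero n] (hodd : Odd n) (hn : 3 ≤ n)
    (d : ℕ) (α : ℝ) (hα : α = 1 / (2 * Real.cos (π / n)))
    (A F : ZMod n → Matrix (Fin d) (Fin d) ℂ)
    (hherm : ∀ i, (A i).IsHermitian)
    (hAF : ∀ i, A i = (2 : ℂ) • F i - 1)
    (hpsd : ∀ i, (F i).PosSemidef)
    (hle : ∀ i, (1 - F i).PosSemidef)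
    (ψ : Fin d → ℂ)
    (horth : ∀ i, (F i * F (i + 1)) *ᵥ ψ = 0 ∧ (F i * F (i - 1)) *ᵥ ψ = 0)
    (hstab : ∀ i, (A i + (α : ℂ) • A (i + 1) + (α : ℂ) • A (i - 1)) *ᵥ ψ =
      ((1 - 2 * α : ℝ) : ℂ) • ψ)
    (hsq : ∀ i, (A i * A i) *ᵥ ψ = ψ) :
    ∀ i, ∀ x ∈ Submodule.span ℂ {ψ, A 1 *ᵥ ψ, A 3 *ᵥ ψ},
      A i *ᵥ x ∈ Submodule.span ℂ {ψ, A 1 *ᵥ ψ, A 3 *ᵥ ψ} := by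
  set V : Submodule ℂ (Fin d → ℂ) := Submodule.span ℂ {ψ, A 1 *ᵥ ψ, A 3 *ᵥ ψ} with hV
  have hψV : ψ ∈ V := Submodule.subset_span (by simp)
  have h1V : A 1 *ᵥ ψ ∈ V := Submodule.subset_span (by simp)
  have h3V : A 3 *ᵥ ψ ∈ V := Submodule.subset_span (by simp)
  -- α ≠ 0
  have hcos : 0 < Real.cos (π / n) := by
    apply Real.cos_pos_of_mem_Ioo
    constructor
    · have : (0:ℝ) < π / n := by positivity
      linarith [Real.pi_pos]
    · have hn0 : (0:ℝ) < n := by positivity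
      have h2n : (2:ℝ) < n := by exact_mod_cast lt_of_lt_of_le (by norm_num) hn
      rw [div_lt_div_iff₀ hn0 (by norm_num)]
      nlinarith [Real.pi_pos]
  have hαR : α ≠ 0 := by
    rw [hα]; positivity
  have hαne : (α : ℂ) ≠ 0 := by exact_mod_cast hαR
  -- the basic recurrence for v j = A j *ᵥ ψ
  have hrecψ : ∀ j : ZMod n, (A j *ᵥ ψ) + (α : ℂ) • (A (j + 1) *ᵥ ψ)
      + (α : ℂ) • (A (j - 1) *ᵥ ψ) = ((1 - 2 * α : ℝ) : ℂ) • ψ := by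
    intro j
    have h := hstab j
    simpa [add_mulVec, smul_mulVec] using h
  -- v 2 ∈ V
  have h2V : A 2 *ᵥ ψ ∈ V := by
    have h := hrecψ 2
    rw [show (2 : ZMod n) + 1 = 3 by norm_num, show (2 : ZMod n) - 1 = 1 by norm_num] at h
    have heq : A 2 *ᵥ ψ = ((1 - 2 * α : ℝ) : ℂ) • ψ - (α : ℂ) • (A 3 *ᵥ ψ)
        - (α : ℂ) • (A 1 *ᵥ ψ) := by rw [← h]; module
    rw [heq]
    exact V.sub_mem (V.sub_mem (V.smul_mem _ hψV) (V.smul_mem _ h3V)) (V.smul_mem _ h1V)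
  -- all v j ∈ V
  have hB : ∀ j : ZMod n, A j *ᵥ ψ ∈ V := by
    apply kcbs_aux_rec V (α : ℂ) hαne _ (fun _ => ((1 - 2 * α : ℝ) : ℂ) • ψ) hrecψ
      (fun _ => V.smul_mem _ hψV) 1 h1V
    rwa [show (1 : ZMod n) + 1 = 2 by norm_num]
  -- neighbor product formula
  have hAψ : ∀ j : ZMod n, A j *ᵥ ψ = (2 : ℂ) • (F j *ᵥ ψ) - ψ := by
    intro j; rw [hAF j, sub_mulVec, smul_mulVec, Matrix.one_mulVec]
  have hnb : ∀ i j : ZMod n, (F i * F j) *ᵥ ψ = 0 →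
      A i *ᵥ (A j *ᵥ ψ) = -(A i *ᵥ ψ) - (A j *ᵥ ψ) - ψ := by
    intro i j h
    have hF : F i *ᵥ (A j *ᵥ ψ) = -(F i *ᵥ ψ) := by
      rw [hAψ j, Matrix.mulVec_sub, Matrix.mulVec_smul, Matrix.mulVec_mulVec, h]
      simp
    rw [hAF i, sub_mulVec, smul_mulVec, Matrix.one_mulVec, hF, hAψ j]
    rw [sub_mulVec, smul_mulVec, Matrix.one_mulVec]
    module
  intro i
  -- recurrence for w j = A i *ᵥ (A j *ᵥ ψ)
  have hrecw : ∀ j : ZMod n, (A i *ᵥ (A j *ᵥ ψ)) + (α : ℂ) • (A i *ᵥ (A (j + 1) *ᵥ ψ))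
      + (α : ℂ) • (A i *ᵥ (A (j - 1) *ᵥ ψ)) = ((1 - 2 * α : ℝ) : ℂ) • (A i *ᵥ ψ) := by
    intro j
    have h := congrArg (fun x => A i *ᵥ x) (hrecψ j)
    simpa [Matrix.mulVec_add, Matrix.mulVec_smul] using h
  have hwii : A i *ᵥ (A i *ᵥ ψ) = ψ := by rw [Matrix.mulVec_mulVec]; exact hsq i
  have hC : ∀ j : ZMod n, A i *ᵥ (A j *ᵥ ψ) ∈ V := by
    apply kcbs_aux_rec V (α : ℂ) hαne _ (fun _ => ((1 - 2 * α : ℝ) : ℂ) • (A i *ᵥ ψ)) hrecw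
      (fun _ => V.smul_mem _ (hB i)) i
    · rw [hwii]; exact hψV
    · rw [hnb i (i + 1) (horth i).1]
      exact V.sub_mem (V.sub_mem (V.neg_mem (hB i)) (hB (i + 1))) hψV
  intro x hx
  induction hx using Submodule.span_induction with
  | mem y hy =>
    rcases hy with h | h | h
    · rw [h]; exact hB i
    · rw [h]; exact hC 1
    · rw [h]; exact hC 3
  | zero => rw [Matrix.mulVec_zero]; exact V.zero_mem
  | add y z _ _ hy hz => rw [Matrix.mulVec_add]; exact V.add_mem hy hz
  | smul c y _ hy => rw [Matrix.mulVec_smul]; exact V.smul_mem c hy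
end

section
/- For n = 5, α = 1/(2cos(π/5)), and Hermitian A₁,…,A₅ with M_{i,1} = −(1/α³)(Aᵢ + αA_{i−1} + αA_{i+1}), M_{i,2} = −(1/α⁴)(−αAᵢ + A_{i−2} + A_{i+2}) (indices mod 5), the operator identity (α⁵/5)∑ᵢ(M_{i,1}² + (α³/2)M_{i,2}²) = (1/2)∑ᵢ{Aᵢ, A_{i+1}} + (1/(2α))∑ᵢ Aᵢ² holds, where {X,Y} = XY + YX. -/
set_option maxHeartbeats 2000000

open Real Matrix

theorem kcbs5_quadratic_identity (d : ℕ)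
    (α : ℝ) (hα : α = 1 / (2 * Real.cos (π / 5)))
    (A M1 M2 : ZMod 5 → Matrix (Fin d) (Fin d) ℂ)
    (hherm : ∀ i, (A i).IsHermitian)
    (hM1 : ∀ i, M1 i = (-(1 / α ^ 3)) • (A i + α • A (i - 1) + α • A (i + 1)))
    (hM2 : ∀ i, M2 i = (-(1 / α ^ 4)) • ((-α) • A i + A (i - 2) + A (i + 2))) :
    (α ^ 5 / 5) • ∑ i : ZMod 5, (M1 i ^ 2 + (α ^ 3 / 2) • M2 i ^ 2) =
      (1 / 2 : ℝ) • ∑ i : ZMod 5, (A i * A (i + 1) + A (i + 1) * A i) +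
        (1 / (2 * α)) • ∑ i : ZMod 5, A i ^ 2 := by
  have h5s : Real.sqrt 5 ^ 2 = 5 := Real.sq_sqrt (by norm_num)
  have h5p : (0:ℝ) < Real.sqrt 5 := Real.sqrt_pos.mpr (by norm_num)
  rw [Real.cos_pi_div_five] at hα
  have hpos : 0 < α := by rw [hα]; positivity
  have hne : α ≠ 0 := ne_of_gt hpos
  have hα2 : α^2 + α = 1 := by rw [hα]; field_simp; nlinarith [h5s]
  have h2 : α^2 = -1*α + 1 := by linear_combination hα2
  have h3 : α^3 = 2*α + -1 := by linear_combination α * h2 + (-1) * h2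
  have h4 : α^4 = -3*α + 2 := by linear_combination α * h3 + (2) * h2
  have h5 : α^5 = 5*α + -3 := by linear_combination α * h4 + (-3) * h2
  have h6 : α^6 = -8*α + 5 := by linear_combination α * h5 + (5) * h2
  have h7 : α^7 = 13*α + -8 := by linear_combination α * h6 + (-8) * h2
  have h8 : α^8 = -21*α + 13 := by linear_combination α * h7 + (13) * h2
  have h9 : α^9 = 34*α + -21 := by linear_combination α * h8 + (-21) * h2
  have h10 : α^10 = -55*α + 34 := by linear_combination α * h9 + (34) * h2
  have h11 : α^11 = 89*α + -55 := by linear_combination α * h10 + (-55) * h2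
  have h12 : α^12 = -144*α + 89 := by linear_combination α * h11 + (89) * h2
  have h13 : α^13 = 233*α + -144 := by linear_combination α * h12 + (-144) * h2
  have h14 : α^14 = -377*α + 233 := by linear_combination α * h13 + (233) * h2
  have h15 : α^15 = 610*α + -377 := by linear_combination α * h14 + (-377) * h2
  have h16 : α^16 = -987*α + 610 := by linear_combination α * h15 + (610) * h2
  have h17 : α^17 = 1597*α + -987 := by linear_combination α * h16 + (-987) * h2
  have h18 : α^18 = -2584*α + 1597 := by linear_combination α * h17 + (1597) * h2
  have h19 : α^19 = 4181*α + -2584 := by linear_combination α * h18 + (-2584) * h2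
  have h20 : α^20 = -6765*α + 4181 := by linear_combination α * h19 + (4181) * h2
  have h21 : α^21 = 10946*α + -6765 := by linear_combination α * h20 + (-6765) * h2
  have h22 : α^22 = -17711*α + 10946 := by linear_combination α * h21 + (10946) * h2
  have h23 : α^23 = 28657*α + -17711 := by linear_combination α * h22 + (-17711) * h2
  have h24 : α^24 = -46368*α + 28657 := by linear_combination α * h23 + (28657) * h2
  have h25 : α^25 = 75025*α + -46368 := by linear_combination α * h24 + (-46368) * h2
  have h26 : α^26 = -121393*α + 75025 := by linear_combination α * h25 + (75025) * h2
  have h27 : α^27 = 196418*α + -121393 := by linear_combination α * h26 + (-121393) * h2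
  have h28 : α^28 = -317811*α + 196418 := by linear_combination α * h27 + (196418) * h2
  have h29 : α^29 = 514229*α + -317811 := by linear_combination α * h28 + (-317811) * h2
  have h30 : α^30 = -832040*α + 514229 := by linear_combination α * h29 + (514229) * h2
  have h31 : α^31 = 1346269*α + -832040 := by linear_combination α * h30 + (-832040) * h2
  have h32 : α^32 = -2178309*α + 1346269 := by linear_combination α * h31 + (1346269) * h2
  have h33 : α^33 = 3524578*α + -2178309 := by linear_combination α * h32 + (-2178309) * h2
  have h34 : α^34 = -5702887*α + 3524578 := by linear_combination α * h33 + (3524578) * h2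
  have h35 : α^35 = 9227465*α + -5702887 := by linear_combination α * h34 + (-5702887) * h2
  have h36 : α^36 = -14930352*α + 9227465 := by linear_combination α * h35 + (9227465) * h2
  have h37 : α^37 = 24157817*α + -14930352 := by linear_combination α * h36 + (-14930352) * h2
  have h38 : α^38 = -39088169*α + 24157817 := by linear_combination α * h37 + (24157817) * h2
  have h39 : α^39 = 63245986*α + -39088169 := by linear_combination α * h38 + (-39088169) * h2
  have h40 : α^40 = -102334155*α + 63245986 := by linear_combination α * h39 + (63245986) * h2
  have h41 : α^41 = 165580141*α + -102334155 := by linear_combination α * h40 + (-102334155) * h2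
  have h42 : α^42 = -267914296*α + 165580141 := by linear_combination α * h41 + (165580141) * h2
  have h43 : α^43 = 433494437*α + -267914296 := by linear_combination α * h42 + (-267914296) * h2
  have h44 : α^44 = -701408733*α + 433494437 := by linear_combination α * h43 + (433494437) * h2
  have h45 : α^45 = 1134903170*α + -701408733 := by linear_combination α * h44 + (-701408733) * h2
  have h46 : α^46 = -1836311903*α + 1134903170 := by linear_combination α * h45 + (1134903170) * h2
  have h47 : α^47 = 2971215073*α + -1836311903 := by linear_combination α * h46 + (-1836311903) * h2
  have h48 : α^48 = -4807526976*α + 2971215073 := by linear_combination α * h47 + (2971215073) * h2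
  have h49 : α^49 = 7778742049*α + -4807526976 := by linear_combination α * h48 + (-4807526976) * h2
  have h50 : α^50 = -12586269025*α + 7778742049 := by linear_combination α * h49 + (7778742049) * h2
  have hsum : ∀ (f : ZMod 5 → Matrix (Fin d) (Fin d) ℂ),
      ∑ i : ZMod 5, f i = f 0 + f 1 + f 2 + f 3 + f 4 := fun f => Fin.sum_univ_five f
  rw [hsum, hsum, hsum]
  simp only [hM1, hM2,
    show ((0:ZMod 5)-1)=4 by decide, show ((0:ZMod 5)+1)=1 by decide,
    show ((0:ZMod 5)-2)=3 by decide, show ((0:ZMod 5)+2)=2 by decide,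
    show ((1:ZMod 5)-1)=0 by decide, show ((1:ZMod 5)+1)=2 by decide,
    show ((1:ZMod 5)-2)=4 by decide, show ((1:ZMod 5)+2)=3 by decide,
    show ((2:ZMod 5)-1)=1 by decide, show ((2:ZMod 5)+1)=3 by decide,
    show ((2:ZMod 5)-2)=0 by decide, show ((2:ZMod 5)+2)=4 by decide,
    show ((3:ZMod 5)-1)=2 by decide, show ((3:ZMod 5)+1)=4 by decide,
    show ((3:ZMod 5)-2)=1 by decide, show ((3:ZMod 5)+2)=0 by decide,
    show ((4:ZMod 5)-1)=3 by decide, show ((4:ZMod 5)+1)=0 by decide,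
    show ((4:ZMod 5)-2)=2 by decide, show ((4:ZMod 5)+2)=1 by decide]
  simp only [pow_two, sq, smul_add, smul_smul, mul_add, add_mul, smul_mul_assoc, mul_smul_comm,
    neg_smul, smul_neg, neg_neg, neg_mul, mul_neg, smul_smul]
  match_scalars
  all_goals field_simp
  all_goals ring_nf
  all_goals try simp only [h50, h49, h48, h47, h46, h45, h44, h43, h42, h41, h40, h39, h38, h37, h36, h35, h34, h33, h32, h31, h30, h29, h28, h27, h26, h25, h24, h23, h22, h21, h20, h19, h18, h17, h16, h15, h14, h13, h12, h11, h10, h9, h8, h7, h6, h5, h4, h3, h2]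
  all_goals try ring_nf
end

section
/- For n = 5, α = 1/(2cos(π/5)), and Hermitian operators A₁,…,A₅ satisfying Aᵢ² ≤ I, with B = −(1/2)∑ᵢ{Aᵢ, A_{i+1}} − α²∑ᵢ Aᵢ (indices mod 5), one has the operator inequality B ≤ 3(1+α²)·I; equivalently, for every unit vector ψ, ⟨ψ|B|ψ⟩ ≤ 3(1+α²). -/
/-!
The cycle `C₅` has adjacency eigenvalues `2`, `2 cos(2π/5) = α` (twice) and `2 cos(4π/5) = -1/α`
(twice), where `α² + α = 1`. Hence `(1/(2α)) ∑ Aᵢ² + (1/2) ∑ {Aᵢ, Aᵢ₊₁}` has no component on the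
`4π/5` Fourier modes; its constant mode, together with the linear term and the constant, is a
perfect square in `∑ Aᵢ`, and its `2π/5` modes are a sum of squares of the cyclic cosine
combinations `∑ⱼ 2 cos(2π(j - m)/5) Aⱼ`. So `3(1 + α²) I - B` is a nonnegative combination of
squares of Hermitian matrices and of the `I - Aᵢ²`.
-/

open Real Matrix
open scoped ComplexOrder

open scoped goldenRatio in
theorem one_div_two_cos_pi_div_five : 1 / (2 * cos (π / 5)) = -ψ := by
  rw [cos_pi_div_five, ← inv_goldenRatio, goldenRatio, one_div]
  ring

theorem ZMod.sum_univ_five {M : Type*} [AddCommMonoid M] (f : ZMod 5 → M) :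
    ∑ i, f i = f 0 + f 1 + f 2 + f 3 + f 4 :=
  Fin.sum_univ_five f

section SumOfSquares

variable {R : Type*} [Ring R] [Algebra ℝ R]

/-- `∑ⱼ 2 cos(2π(j - m)/5) Aⱼ`, written with `2 cos(2π/5) = α` and `2 cos(4π/5) = -(1 + α)`. -/
def cycleCosineSum (α : ℝ) (A : ZMod 5 → R) (m : ZMod 5) : R :=
  (2 : ℝ) • A m + α • (A (m + 1) + A (m + 4)) - (1 + α) • (A (m + 2) + A (m + 3))

theorem kcbs_sum_of_squares {α : ℝ} (hα : α ^ 2 + α = 1) (A : ZMod 5 → R) :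
    (3 * (1 + α ^ 2)) • (1 : R)
        - ((-(1 / 2) : ℝ) • ∑ i, (A i * A (i + 1) + A (i + 1) * A i) - α ^ 2 • ∑ i, A i)
      = ((1 + α) / 2) • ∑ i, (1 - A i ^ 2)
        + ((3 + α) / 10) • (∑ i, A i + (3 - 4 * α) • 1) ^ 2
        + ((1 + 2 * α) / 50) • ∑ m, cycleCosineSum α A m ^ 2 := by
  simp only [cycleCosineSum, ZMod.sum_univ_five]
  norm_num
  -- `norm_num` leaves the indices `5, …, 8` unreduced in `ZMod 5`
  simp only [show (5 : ZMod 5) = 0 from rfl, show (6 : ZMod 5) = 1 from rfl,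
    show (7 : ZMod 5) = 2 from rfl, show (8 : ZMod 5) = 3 from rfl]
  simp only [sq, mul_add, add_mul, mul_sub, sub_mul, smul_add, smul_sub, smul_mul_assoc,
    mul_smul_comm, smul_smul, mul_one, one_mul]
  match_scalars <;> grind

end SumOfSquares

section Hermitian

variable {n 𝕜 : Type*} [Fintype n] [DecidableEq n] [RCLike 𝕜]

theorem Matrix.IsHermitian.posSemidef_sq {M : Matrix n n 𝕜} (hM : M.IsHermitian) :
    (M ^ 2).PosSemidef := by
  simpa only [sq, hM.eq] using posSemidef_conjTranspose_mul_self M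

theorem isHermitian_cycleCosineSum {α : ℝ} {A : ZMod 5 → Matrix n n 𝕜}
    (hA : ∀ i, (A i).IsHermitian) (m : ZMod 5) : (cycleCosineSum α A m).IsHermitian := by
  have hsmul : ∀ (c : ℝ) {M : Matrix n n 𝕜}, M.IsHermitian → (c • M).IsHermitian :=
    fun c _ hM => hM.smul (IsSelfAdjoint.all c)
  exact ((hsmul _ (hA m)).add (hsmul _ ((hA _).add (hA _)))).sub
    (hsmul _ ((hA _).add (hA _)))

theorem kcbs_posSemidef {α : ℝ} (hα : α ^ 2 + α = 1) (hα₀ : 0 ≤ α) (A : ZMod 5 → Matrix n n 𝕜)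
    (hA : ∀ i, (A i).IsHermitian) (hA₁ : ∀ i, (1 - A i ^ 2).PosSemidef) :
    ((3 * (1 + α ^ 2)) • 1
      - ((-(1 / 2) : ℝ) • ∑ i, (A i * A (i + 1) + A (i + 1) * A i) - α ^ 2 • ∑ i, A i)).PosSemidef := by
  rw [kcbs_sum_of_squares hα]
  have hsum : (∑ i, A i + (3 - 4 * α) • 1).IsHermitian :=
    (isSelfAdjoint_sum _ fun i _ => hA i).add (isHermitian_one.smul (IsSelfAdjoint.all _))
  have hsquares : (∑ m, cycleCosineSum α A m ^ 2).PosSemidef :=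
    posSemidef_sum _ fun m _ => (isHermitian_cycleCosineSum hA m).posSemidef_sq
  exact (((posSemidef_sum _ fun i _ => hA₁ i).smul (by positivity)).add
    (hsum.posSemidef_sq.smul (by positivity))).add (hsquares.smul (by positivity))

theorem re_dotProduct_mulVec_le_of_posSemidef_smul_one_sub {c : ℝ} {B : Matrix n n 𝕜}
    (hB : (c • 1 - B).PosSemidef) {v : n → 𝕜} (hv : star v ⬝ᵥ v = 1) :
    RCLike.re (star v ⬝ᵥ (B *ᵥ v)) ≤ c := by
  have h := hB.dotProduct_mulVec_nonneg v
  rw [sub_mulVec, smul_mulVec, one_mulVec, dotProduct_sub, dotProduct_smul, hv,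
    RCLike.real_smul_eq_coe_mul, mul_one, RCLike.nonneg_iff] at h
  simpa [sub_nonneg] using h.1

end Hermitian

theorem kcbs5_quantum_bound (d : ℕ)
    (α : ℝ) (hα : α = 1 / (2 * Real.cos (π / 5)))
    (A : ZMod 5 → Matrix (Fin d) (Fin d) ℂ)
    (hherm : ∀ i, (A i).IsHermitian)
    (hle : ∀ i, ((1 : Matrix (Fin d) (Fin d) ℂ) - A i ^ 2).PosSemidef)
    (B : Matrix (Fin d) (Fin d) ℂ)
    (hB : B = (-(1 / 2) : ℝ) • ∑ i : ZMod 5, (A i * A (i + 1) + A (i + 1) * A i)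
      - (α ^ 2) • ∑ i : ZMod 5, A i) :
    ((3 * (1 + α ^ 2)) • (1 : Matrix (Fin d) (Fin d) ℂ) - B).PosSemidef ∧
    ∀ ψ : Fin d → ℂ, star ψ ⬝ᵥ ψ = 1 →
      (star ψ ⬝ᵥ (B *ᵥ ψ)).re ≤ 3 * (1 + α ^ 2) := by
  rw [one_div_two_cos_pi_div_five] at hα
  have hα₁ : α ^ 2 + α = 1 := by rw [hα, neg_sq, goldenConj_sq]; ring
  have hα₀ : 0 ≤ α := by rw [hα]; exact neg_nonneg.mpr goldenConj_neg.le
  have hP : ((3 * (1 + α ^ 2)) • (1 : Matrix (Fin d) (Fin d) ℂ) - B).PosSemidef := by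
    rw [hB]
    exact kcbs_posSemidef hα₁ hα₀ A hherm hle
  exact ⟨hP, fun ψ hψ => re_dotProduct_mulVec_le_of_posSemidef_smul_one_sub hP hψ⟩
end

section
/- For n = 5 and α = 1/(2cos(π/5)), the maximum over assignments a : Fin 5 → {−1,1} of −∑ᵢ aᵢa_{i+1} − α²∑ᵢ aᵢ (indices mod 5) equals 3 + α², and this is strictly less than the quantum bound 3(1 + α²). -/
/-!
For signs `aᵢ = ±1` on a cycle of odd length `n`, the edge products `aᵢaᵢ₊₁` multiply to
`(∏ aᵢ)² = 1`, so they cannot all be `-1` and `-∑ aᵢaᵢ₊₁ ≤ n - 2`; moreover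
`∑ (1 + aᵢ)(1 + aᵢ₊₁) ≥ 0` gives `-∑ aᵢaᵢ₊₁ ≤ n + 2 ∑ aᵢ`. For `0 ≤ β ≤ 2` the target
`-∑ aᵢaᵢ₊₁ - β ∑ aᵢ ≤ n - 2 + β` is the convex combination of these two bounds with weights
`1 - β/2` and `β/2`, and `a = (-1, -1, 1, -1, 1)` attains it for `n = 5`. Finally
`α = 1 / (2 cos (π/5)) ∈ (0, 1)` because `cos (π/5) = (1 + √5)/4 > 1/2`, so `β = α²` qualifies.
-/

open Real Finset

lemma two_sub_card_le_sum_of_prod_eq_one {ι : Type*} [Fintype ι] (t : ι → ℝ)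
    (ht : ∀ i, t i = 1 ∨ t i = -1) (hodd : Odd (Fintype.card ι)) (hprod : ∏ i, t i = 1) :
    2 - (Fintype.card ι : ℝ) ≤ ∑ i, t i := by
  obtain ⟨j, hj⟩ : ∃ j, t j = 1 := by
    by_contra! h
    have hneg : ∀ i, t i = -1 := fun i => (ht i).resolve_left (h i)
    norm_num [hneg, hodd.neg_one_pow] at hprod
  have hshift : 2 ≤ ∑ i, (t i + 1) :=
    calc (2 : ℝ) = t j + 1 := by rw [hj]; norm_num
      _ ≤ ∑ i, (t i + 1) := single_le_sum (f := fun i => t i + 1)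
          (fun i _ => by rcases ht i with h | h <;> simp [h]) (mem_univ j)
  simp only [sum_add_distrib, sum_const, card_univ, nsmul_eq_mul, mul_one] at hshift
  linarith

section Cycle

variable {n : ℕ} [NeZero n]

lemma sum_comp_add_one (f : ZMod n → ℝ) : ∑ i, f (i + 1) = ∑ i, f i :=
  Fintype.sum_equiv (Equiv.addRight 1) _ _ fun _ => rfl

lemma prod_comp_add_one (f : ZMod n → ℝ) : ∏ i, f (i + 1) = ∏ i, f i :=
  Fintype.prod_equiv (Equiv.addRight 1) _ _ fun _ => rfl

lemma prod_mul_comp_add_one_of_sign (a : ZMod n → ℝ) (ha : ∀ i, a i = 1 ∨ a i = -1) :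
    ∏ i, a i * a (i + 1) = 1 := by
  rw [prod_mul_distrib, prod_comp_add_one, ← prod_mul_distrib]
  exact prod_eq_one fun i _ => by rcases ha i with h | h <;> simp [h]

lemma neg_sum_mul_comp_add_one_le (hn : Odd n) (a : ZMod n → ℝ) (ha : ∀ i, a i = 1 ∨ a i = -1) :
    -∑ i, a i * a (i + 1) ≤ n - 2 := by
  have := two_sub_card_le_sum_of_prod_eq_one (fun i => a i * a (i + 1))
    (fun i => by rcases ha i with h | h <;> rcases ha (i + 1) with h' | h' <;> simp [h, h'])
    (by rwa [ZMod.card]) (prod_mul_comp_add_one_of_sign a ha)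
  rw [ZMod.card] at this
  linarith

lemma neg_card_le_sum_mul_comp_add_one_add_two_mul_sum (a : ZMod n → ℝ) (ha : ∀ i, -1 ≤ a i) :
    -(n : ℝ) ≤ ∑ i, a i * a (i + 1) + 2 * ∑ i, a i := by
  have h : 0 ≤ ∑ i, (1 + a i) * (1 + a (i + 1)) :=
    sum_nonneg fun i _ => mul_nonneg (by linarith [ha i]) (by linarith [ha (i + 1)])
  simp only [mul_add, add_mul, one_mul, mul_one, sum_add_distrib, sum_comp_add_one, sum_const,
    card_univ, ZMod.card, nsmul_eq_mul] at h
  linarith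

def kcbsValue (n : ℕ) [NeZero n] (β : ℝ) (a : ZMod n → ℝ) : ℝ :=
  -∑ i, a i * a (i + 1) - β * ∑ i, a i

theorem kcbsValue_le (hn : Odd n) {β : ℝ} (hβ₀ : 0 ≤ β) (hβ₂ : β ≤ 2) (a : ZMod n → ℝ)
    (ha : ∀ i, a i = 1 ∨ a i = -1) : kcbsValue n β a ≤ n - 2 + β := by
  have hE := neg_sum_mul_comp_add_one_le hn a ha
  have hS := neg_card_le_sum_mul_comp_add_one_add_two_mul_sum a
    fun i => by rcases ha i with h | h <;> simp [h]
  unfold kcbsValue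
  nlinarith [mul_nonneg (sub_nonneg.2 hβ₂) (sub_nonneg.2 hE),
    mul_nonneg hβ₀ (neg_le_iff_add_nonneg.1 hS)]

end Cycle

def kcbsWitness (i : ZMod 5) : ℝ := if i = 2 ∨ i = 4 then 1 else -1

lemma kcbsValue_five_kcbsWitness (β : ℝ) : kcbsValue 5 β kcbsWitness = 3 + β := by
  have hsum (f : ZMod 5 → ℝ) : ∑ i, f i = f 0 + f 1 + f 2 + f 3 + f 4 := Fin.sum_univ_five f
  simp +decide only [kcbsValue, hsum, kcbsWitness]
  norm_num

theorem isGreatest_kcbsValue_five {β : ℝ} (hβ₀ : 0 ≤ β) (hβ₂ : β ≤ 2) :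
    IsGreatest {x | ∃ a : ZMod 5 → ℝ, (∀ i, a i = 1 ∨ a i = -1) ∧ x = kcbsValue 5 β a}
      (3 + β) := by
  refine ⟨⟨kcbsWitness, fun i => ?_, (kcbsValue_five_kcbsWitness β).symm⟩, ?_⟩
  · unfold kcbsWitness
    split_ifs <;> simp
  · rintro x ⟨a, ha, rfl⟩
    exact (kcbsValue_le (by decide) hβ₀ hβ₂ a ha).trans_eq (by norm_num)

lemma one_div_two_cos_pi_div_five_mem_Ioo : 1 / (2 * cos (π / 5)) ∈ Set.Ioo 0 1 := by
  have hcos : 1 / 2 < cos (π / 5) := by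
    rw [cos_pi_div_five]
    have : 1 < √5 := by rw [lt_sqrt zero_le_one]; norm_num
    linarith
  exact ⟨by positivity, by rw [div_lt_one (by linarith)]; linarith⟩

theorem kcbs5_classical_vs_quantum
    (α : ℝ) (hα : α = 1 / (2 * Real.cos (π / 5))) :
    IsGreatest
      {x : ℝ | ∃ a : ZMod 5 → ℝ, (∀ i, a i = 1 ∨ a i = -1) ∧
        x = -∑ i : ZMod 5, a i * a (i + 1) - α ^ 2 * ∑ i : ZMod 5, a i}
      (3 + α ^ 2) ∧
    3 + α ^ 2 < 3 * (1 + α ^ 2) := by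
  obtain ⟨hα₀, hα₁⟩ : α ∈ Set.Ioo 0 1 := hα ▸ one_div_two_cos_pi_div_five_mem_Ioo
  exact ⟨isGreatest_kcbsValue_five (sq_nonneg α) (by nlinarith), by nlinarith [pow_pos hα₀ 2]⟩
end

section
/- Let n = 2^m + 1 with m ≥ 2, φ_k = ((n−1)/n)·π·k, and β_k = 1/(2(1 − cos φ_k)). Then for every x with 1 ≤ x ≤ m−1, the recursively defined ratios c_{2^x}/c_1 = (1/2^x)·∏_{j=1}^{x} β_{2^{j−1}}²/(β_{2^j}(2β_{2^j} − 1)) are all strictly positive; equivalently, ∏_{j=1}^{x} sec(φ_{2^j}) > 0 since cos(φ_{2^j}) = cos(π·2^j/n) > 0 for all 1 ≤ j ≤ m−1. -/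
open Real Finset

theorem kcbs_sos_coefficients_positive (m n : ℕ) (hm : 2 ≤ m) (hn : n = 2 ^ m + 1)
    (φ : ℕ → ℝ) (hφ : ∀ k, φ k = ((n : ℝ) - 1) / n * π * k)
    (β : ℕ → ℝ) (hβ : ∀ k, β k = 1 / (2 * (1 - Real.cos (φ k)))) :
    (∀ j, 1 ≤ j → j ≤ m - 1 → 0 < Real.cos (π * 2 ^ j / n)) ∧
    (∀ j, 1 ≤ j → j ≤ m - 1 → Real.cos (φ (2 ^ j)) = Real.cos (π * 2 ^ j / n)) ∧
    (∀ x, 1 ≤ x → x ≤ m - 1 →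
      0 < (1 / 2 ^ x : ℝ) * ∏ j ∈ Finset.Icc 1 x,
        (β (2 ^ (j - 1))) ^ 2 / (β (2 ^ j) * (2 * β (2 ^ j) - 1))) := by
  have hn5 : 5 ≤ n := by
    rw [hn]
    calc (5:ℕ) ≤ 2 ^ 2 + 1 := by norm_num
    _ ≤ 2 ^ m + 1 := by gcongr <;> norm_num
  have hnR : (0:ℝ) < n := by positivity
  have hpi : (0:ℝ) < π := Real.pi_pos
  -- angle bounds
  have hbound : ∀ j, 1 ≤ j → j ≤ m - 1 → 0 < π * 2 ^ j / n ∧ π * 2 ^ j / n < π / 2 := by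
    intro j hj1 hj2
    have h2n : (2:ℝ) * 2 ^ j < n := by
      have h1 : (2:ℕ) ^ (j + 1) ≤ 2 ^ m := Nat.pow_le_pow_right (by norm_num) (by omega)
      have h2 : ((2:ℕ) ^ (j + 1) : ℝ) ≤ ((2:ℕ) ^ m : ℝ) := by exact_mod_cast h1
      rw [hn]
      push_cast at h2 ⊢
      rw [pow_succ] at h2
      linarith
    constructor
    · positivity
    · rw [div_lt_iff₀ hnR]
      nlinarith
  have part1 : ∀ j, 1 ≤ j → j ≤ m - 1 → 0 < Real.cos (π * 2 ^ j / n) := by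
    intro j hj1 hj2
    obtain ⟨h1, h2⟩ := hbound j hj1 hj2
    exact Real.cos_pos_of_mem_Ioo ⟨by linarith, h2⟩
  have part2 : ∀ j, 1 ≤ j → Real.cos (φ (2 ^ j)) = Real.cos (π * 2 ^ j / n) := by
    intro j hj1
    have hφeq : φ (2 ^ j) = (2 ^ (j - 1) : ℕ) * (2 * π) - π * 2 ^ j / n := by
      rw [hφ]
      have h2j : (2:ℝ) ^ j = 2 * 2 ^ (j - 1) := by
        rw [← pow_succ']
        congr 1
        omega
      have hne : (n:ℝ) ≠ 0 := ne_of_gt hnR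
      push_cast
      rw [h2j]
      field_simp
    rw [hφeq, Real.cos_nat_mul_two_pi_sub]
  -- cos < 1 facts
  have hcoslt1 : ∀ θ : ℝ, 0 < θ → θ ≤ π → Real.cos θ < 1 := by
    intro θ h0 hθ
    have := Real.cos_lt_cos_of_nonneg_of_le_pi (le_refl 0) hθ h0
    rwa [Real.cos_zero] at this
  -- β positive for relevant indices
  have hβpos : ∀ j, 1 ≤ j → j ≤ m - 1 → 0 < β (2 ^ j) ∧ Real.cos (φ (2 ^ j)) < 1 := by
    intro j hj1 hj2
    obtain ⟨h1, h2⟩ := hbound j hj1 hj2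
    have hc1 : Real.cos (φ (2 ^ j)) < 1 := by
      rw [part2 j hj1]
      exact hcoslt1 _ h1 (by linarith)
    refine ⟨?_, hc1⟩
    rw [hβ]
    have : 0 < 1 - Real.cos (φ (2 ^ j)) := by linarith
    positivity
  have hβ1pos : 0 < β 1 := by
    have hφ1 : φ 1 = π - π / n := by
      rw [hφ]
      have hne : (n:ℝ) ≠ 0 := ne_of_gt hnR
      push_cast
      field_simp
    have hc : Real.cos (φ 1) < 1 := by
      rw [hφ1]
      apply hcoslt1
      · have : π / n < π := by
          rw [div_lt_iff₀ hnR]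
          have h1n : (1:ℝ) < n := by exact_mod_cast (by omega : 1 < n)
          nlinarith
        linarith
      · have : 0 < π / n := by positivity
        linarith
    rw [hβ]
    have : 0 < 1 - Real.cos (φ 1) := by linarith
    positivity
  refine ⟨part1, fun j hj1 hj2 => part2 j hj1, ?_⟩
  intro x hx1 hx2
  have hprod : 0 < ∏ j ∈ Finset.Icc 1 x,
      (β (2 ^ (j - 1))) ^ 2 / (β (2 ^ j) * (2 * β (2 ^ j) - 1)) := by
    apply Finset.prod_pos
    intro j hj
    rw [Finset.mem_Icc] at hj
    obtain ⟨hj1, hjx⟩ := hj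
    have hjm : j ≤ m - 1 := le_trans hjx hx2
    obtain ⟨hbp, hc1⟩ := hβpos j hj1 hjm
    -- numerator positive
    have hnum : 0 < (β (2 ^ (j - 1))) ^ 2 := by
      rcases eq_or_lt_of_le hj1 with h | h
      · rw [← h]
        simpa using pow_pos hβ1pos 2
      · have hj1' : 1 ≤ j - 1 := by omega
        have hjm' : j - 1 ≤ m - 1 := by omega
        exact pow_pos (hβpos (j - 1) hj1' hjm').1 2
    -- denominator positive
    have hden : 0 < β (2 ^ j) * (2 * β (2 ^ j) - 1) := by
      have hc0 : 0 < Real.cos (φ (2 ^ j)) := by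
        rw [part2 j hj1]; exact part1 j hj1 hjm
      set c := Real.cos (φ (2 ^ j)) with hc
      have hd : 0 < 1 - c := by linarith
      have hβval : β (2 ^ j) = 1 / (2 * (1 - c)) := by rw [hβ]
      rw [hβval]
      have key : 1 / (2 * (1 - c)) * (2 * (1 / (2 * (1 - c))) - 1) = c / (2 * (1 - c) ^ 2) := by
        field_simp
        ring
      rw [key]
      positivity
    exact div_pos hnum hden
  have : (0:ℝ) < 1 / 2 ^ x := by positivity
  positivity
end
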